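/- arXiv:1710.08129 — 8 statements merged into one kernel-verified Lean document; each statement's English description precedes it below -/
import Mathlib

section
/- Let X be a complex Banach space, x, y ∈ X, and α a unimodular complex number. If y ∉ x_α^+ (i.e., there exists t₀ > 0 with ‖x + t₀αy‖ < ‖x‖), then y ∈ x_α^- (i.e., ‖x + tαy‖ ≥ ‖x‖ for all t ≤ 0). -/
theorem stmt_0 {X : Type*} [NormedAddCommGroup X] [NormedSpace ℂ X] [CompleteSpace X]
    (x y : X) (α : ℂ) (hα : ‖α‖ = 1)
    (h : ∃ t₀ : ℝ, 0 < t₀ ∧ ‖x + ((t₀ : ℂ) * α) • y‖ < ‖x‖) :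
    ∀ t : ℝ, t ≤ 0 → ‖x + ((t : ℂ) * α) • y‖ ≥ ‖x‖ := by
  obtain ⟨t₀, ht₀, hlt⟩ := h
  intro t ht
  rcases ht.eq_or_lt with rfl | ht
  · simp
  set w : X := α • y with hw
  have hrw : ∀ s : ℝ, x + ((s : ℂ) * α) • y = x + s • w := by
    intro s
    rw [hw, mul_smul, Complex.coe_smul]
  rw [hrw] at hlt ⊢
  have htt : (0:ℝ) < t₀ - t := by linarith
  set l : ℝ := t₀ / (t₀ - t) with hl'
  set m : ℝ := -t / (t₀ - t) with hm'
  have hl : 0 < l := div_pos ht₀ htt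
  have hm : 0 < m := div_pos (by linarith) htt
  have hlm : l + m = 1 := by rw [hl', hm']; field_simp; ring
  have h0 : l * t + m * t₀ = 0 := by rw [hl', hm']; field_simp; ring
  have key : l • (x + t • w) + m • (x + t₀ • w) = x := by
    have : l • (x + t • w) + m • (x + t₀ • w)
        = (l + m) • x + (l * t + m * t₀) • w := by module
    rw [this, hlm, h0, one_smul, zero_smul, add_zero]
  have hnorm : ‖x‖ ≤ l * ‖x + t • w‖ + m * ‖x + t₀ • w‖ := by
    calc ‖x‖ = ‖l • (x + t • w) + m • (x + t₀ • w)‖ := by rw [key]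
    _ ≤ ‖l • (x + t • w)‖ + ‖m • (x + t₀ • w)‖ := norm_add_le _ _
    _ = l * ‖x + t • w‖ + m * ‖x + t₀ • w‖ := by
        rw [norm_smul, norm_smul, Real.norm_of_nonneg hl.le, Real.norm_of_nonneg hm.le]
  have h1 : m * ‖x + t₀ • w‖ < m * ‖x‖ := mul_lt_mul_of_pos_left hlt hm
  have h2 : l * ‖x‖ + m * ‖x‖ = ‖x‖ := by rw [← add_mul, hlm, one_mul]
  nlinarith [h1, hnorm, hl, hm, h2]
end

section
/- Let X be a complex Banach space and x, y ∈ X. Then x ⊥_B y (Birkhoff-James orthogonality: ‖x + λy‖ ≥ ‖x‖ for all λ ∈ ℂ) if and only if y ∈ x^+ and y ∈ x^-, where x^+ (resp. x^-) is the intersection over all unimodular α with arg α ∈ [0, π) of x_α^+ (resp. x_α^-). -/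
theorem stmt_5 {X : Type*} [NormedAddCommGroup X] [NormedSpace ℂ X] [CompleteSpace X]
    (x y : X) :
    (∀ lam : ℂ, ‖x + lam • y‖ ≥ ‖x‖) ↔
      ((∀ α : ℂ, ‖α‖ = 1 → α.arg ∈ Set.Ico 0 Real.pi →
          ∀ t : ℝ, 0 ≤ t → ‖x + ((t : ℂ) * α) • y‖ ≥ ‖x‖) ∧
        (∀ α : ℂ, ‖α‖ = 1 → α.arg ∈ Set.Ico 0 Real.pi →
          ∀ t : ℝ, t ≤ 0 → ‖x + ((t : ℂ) * α) • y‖ ≥ ‖x‖)) := by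
  constructor
  · intro h
    exact ⟨fun α _ _ t _ => h _, fun α _ _ t _ => h _⟩
  · rintro ⟨h1, h2⟩ lam
    rcases eq_or_ne lam 0 with rfl | hl
    · have := h1 1 (by simp) (by simp [Real.pi_pos]) 0 le_rfl
      simpa using this
    have hnorm : (0:ℝ) < ‖lam‖ := norm_pos_iff.mpr hl
    have hne : ((‖lam‖:ℝ):ℂ) ≠ 0 := Complex.ofReal_ne_zero.mpr hnorm.ne'
    by_cases hc : 0 ≤ lam.arg ∧ lam.arg < Real.pi
    · have harg : (lam / (‖lam‖:ℂ)).arg = lam.arg := by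
        rw [div_eq_inv_mul, ← Complex.ofReal_inv, Complex.arg_real_mul _ (by positivity)]
      have hα : ‖lam / (‖lam‖:ℂ)‖ = 1 := by
        rw [norm_div, Complex.norm_real, Real.norm_eq_abs, abs_norm, div_self hnorm.ne']
      have := h1 (lam / (‖lam‖:ℂ)) hα
          (by rw [Set.mem_Ico, harg]; exact hc) ‖lam‖ hnorm.le
      have heq : ((‖lam‖:ℝ):ℂ) * (lam / (‖lam‖:ℂ)) = lam := by
        rw [mul_comm, div_mul_cancel₀ _ hne]
      rwa [heq] at this
    · have hargneg : 0 ≤ (-lam).arg ∧ (-lam).arg < Real.pi := by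
        push_neg at hc
        rcases lt_or_ge lam.arg 0 with h0 | h0
        · have him : lam.im < 0 := Complex.arg_neg_iff.mp h0
          rw [Complex.arg_neg_eq_arg_add_pi_of_im_neg him]
          constructor
          · linarith [Complex.neg_pi_lt_arg lam]
          · linarith
        · have hpi : lam.arg = Real.pi := le_antisymm (Complex.arg_le_pi lam) (hc h0)
          have h0' : (-lam).arg = 0 := by
            rw [Complex.arg_eq_pi_iff] at hpi
            rw [Complex.arg_eq_zero_iff]
            constructor
            · simpa using hpi.1.le
            · simpa using hpi.2
          simp [h0', Real.pi_pos]
      have harg : (-lam / (‖lam‖:ℂ)).arg = (-lam).arg := by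
        rw [div_eq_inv_mul, ← Complex.ofReal_inv, Complex.arg_real_mul _ (by positivity)]
      have hα : ‖-lam / (‖lam‖:ℂ)‖ = 1 := by
        rw [norm_div, norm_neg, Complex.norm_real, Real.norm_eq_abs, abs_norm,
          div_self hnorm.ne']
      have := h2 (-lam / (‖lam‖:ℂ)) hα
          (by rw [Set.mem_Ico, harg]; exact hargneg) (-‖lam‖) (by linarith)
      have heq : ((-‖lam‖:ℝ):ℂ) * (-lam / (‖lam‖:ℂ)) = lam := by
        rw [Complex.ofReal_neg, neg_mul, mul_comm, neg_div, neg_mul, neg_neg,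
          div_mul_cancel₀ _ hne]
      rwa [heq] at this
end

section
/- Let X, Y be complex Banach spaces and T, A : X → Y bounded linear operators with T ≠ 0. Suppose that for each unimodular α with arg α ∈ [0, π) there exist sequences {xₙ}, {yₙ} of unit vectors in X and sequences {εₙ}, {δₙ} of positive reals with εₙ → 0, δₙ → 0, ‖Txₙ‖ → ‖T‖, ‖Tyₙ‖ → ‖T‖, and for all n: ‖Txₙ + tαAxₙ‖ ≥ √(1−εₙ²)‖Txₙ‖ for all t ≥ 0 and ‖Tyₙ + tαAyₙ‖ ≥ √(1−δₙ²)‖Tyₙ‖ for all t ≤ 0. Then T ⊥_B A. -/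
/-!
Write `λ = t α` with `t` real and `α` unimodular, `arg α ∈ [0, π)`. If `t ≥ 0` the vectors `xₙ`
(if `t ≤ 0` the vectors `yₙ`) satisfy `‖(T + λA) xₙ‖ ≥ √(1 - εₙ²) ‖T xₙ‖`, and the right-hand side
tends to `‖T‖`, so `‖T + λA‖ ≥ ‖T‖`.
-/

open Filter Topology

theorem Complex.arg_mem_Ico_or_arg_neg_mem_Ico (z : ℂ) :
    z.arg ∈ Set.Ico 0 Real.pi ∨ (-z).arg ∈ Set.Ico 0 Real.pi := by
  simp only [Set.mem_Ico, arg_nonneg_iff, arg_lt_pi_iff, neg_re, neg_im]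
  rcases lt_trichotomy z.im 0 with h | h | h
  · right; exact ⟨by linarith, .inr (neg_pos.2 h).ne'⟩
  · rcases le_total 0 z.re with h' | h'
    · left; exact ⟨h.ge, .inl h'⟩
    · right; exact ⟨by linarith, .inl (by linarith)⟩
  · left; exact ⟨h.le, .inr h.ne'⟩

theorem Complex.exists_norm_eq_one_arg_mem_Ico_eq_ofReal_mul (z : ℂ) :
    ∃ α : ℂ, ‖α‖ = 1 ∧ α.arg ∈ Set.Ico 0 Real.pi ∧ ∃ t : ℝ, z = t * α := by
  have normalize (w : ℂ) (hw : w ≠ 0) (harg : w.arg ∈ Set.Ico 0 Real.pi) :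
      ∃ α : ℂ, ‖α‖ = 1 ∧ α.arg ∈ Set.Ico 0 Real.pi ∧ w = ‖w‖ * α := by
    have hw' : (0 : ℝ) < ‖w‖ := norm_pos_iff.2 hw
    refine ⟨(‖w‖⁻¹ : ℝ) * w, ?_, by rwa [arg_real_mul w (inv_pos.2 hw')], ?_⟩
    · rw [norm_mul, norm_real, Real.norm_of_nonneg (inv_nonneg.2 hw'.le), inv_mul_cancel₀ hw'.ne']
    · rw [← mul_assoc, ← ofReal_mul, mul_inv_cancel₀ hw'.ne', ofReal_one, one_mul]
  rcases eq_or_ne z 0 with rfl | hz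
  · exact ⟨1, by simp, by simp [Real.pi_pos], 0, by simp⟩
  rcases z.arg_mem_Ico_or_arg_neg_mem_Ico with h | h
  · obtain ⟨α, hα, hαarg, hzα⟩ := normalize z hz h
    exact ⟨α, hα, hαarg, ‖z‖, hzα⟩
  · obtain ⟨α, hα, hαarg, hzα⟩ := normalize (-z) (neg_ne_zero.2 hz) h
    exact ⟨α, hα, hαarg, -‖-z‖, by push_cast; linear_combination -hzα⟩

theorem tendsto_sqrt_one_sub_sq_of_tendsto_zero {ι : Type*} {l : Filter ι} {ε : ι → ℝ}
    (hε : Tendsto ε l (𝓝 0)) : Tendsto (fun i => √(1 - ε i ^ 2)) l (𝓝 1) := by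
  simpa using ((tendsto_const_nhds (x := (1 : ℝ))).sub (hε.pow 2)).sqrt

namespace ContinuousLinearMap

variable {𝕜 E F : Type*} [NontriviallyNormedField 𝕜] [SeminormedAddCommGroup E]
  [SeminormedAddCommGroup F] [NormedSpace 𝕜 E] [NormedSpace 𝕜 F]

theorem le_opNorm_of_tendsto {ι : Type*} {l : Filter ι} [l.NeBot] {S : E →L[𝕜] F} {x : ι → E}
    {u : ι → ℝ} {a : ℝ} (hx : ∀ i, ‖x i‖ ≤ 1) (hu : Tendsto u l (𝓝 a))
    (hle : ∀ i, u i ≤ ‖S (x i)‖) : a ≤ ‖S‖ :=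
  le_of_tendsto hu <| Eventually.of_forall fun i =>
    (hle i).trans <| by simpa using S.le_opNorm_of_le (hx i)

theorem opNorm_le_of_sqrt_one_sub_sq_mul_le {ι : Type*} {l : Filter ι} [l.NeBot]
    {T S : E →L[𝕜] F} {x : ι → E} {ε : ι → ℝ} (hx : ∀ i, ‖x i‖ ≤ 1)
    (hε : Tendsto ε l (𝓝 0)) (hTx : Tendsto (fun i => ‖T (x i)‖) l (𝓝 ‖T‖))
    (hle : ∀ i, √(1 - ε i ^ 2) * ‖T (x i)‖ ≤ ‖S (x i)‖) : ‖T‖ ≤ ‖S‖ :=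
  le_opNorm_of_tendsto hx (by simpa using (tendsto_sqrt_one_sub_sq_of_tendsto_zero hε).mul hTx) hle

end ContinuousLinearMap

theorem stmt_7_general {X Y : Type*} [NormedAddCommGroup X] [NormedSpace ℂ X]
    [NormedAddCommGroup Y] [NormedSpace ℂ Y]
    (T A : X →L[ℂ] Y)
    (h : ∀ α : ℂ, ‖α‖ = 1 → α.arg ∈ Set.Ico 0 Real.pi →
      ∃ (x y : ℕ → X) (ε δ : ℕ → ℝ),
        (∀ n, ‖x n‖ = 1) ∧ (∀ n, ‖y n‖ = 1) ∧
        (∀ n, 0 < ε n) ∧ (∀ n, 0 < δ n) ∧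
        Tendsto ε atTop (𝓝 0) ∧ Tendsto δ atTop (𝓝 0) ∧
        Tendsto (fun n => ‖T (x n)‖) atTop (𝓝 ‖T‖) ∧
        Tendsto (fun n => ‖T (y n)‖) atTop (𝓝 ‖T‖) ∧
        (∀ n, ∀ t : ℝ, 0 ≤ t →
          ‖T (x n) + ((t : ℂ) * α) • A (x n)‖ ≥ Real.sqrt (1 - (ε n) ^ 2) * ‖T (x n)‖) ∧
        (∀ n, ∀ t : ℝ, t ≤ 0 →
          ‖T (y n) + ((t : ℂ) * α) • A (y n)‖ ≥ Real.sqrt (1 - (δ n) ^ 2) * ‖T (y n)‖)) :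
    ∀ lam : ℂ, ‖T + lam • A‖ ≥ ‖T‖ := by
  intro lam
  obtain ⟨α, hα, hαarg, t, rfl⟩ := lam.exists_norm_eq_one_arg_mem_Ico_eq_ofReal_mul
  obtain ⟨x, y, ε, δ, hx, hy, -, -, hε, hδ, hTx, hTy, hxα, hyα⟩ := h α hα hαarg
  rcases le_total 0 t with ht | ht
  · exact ContinuousLinearMap.opNorm_le_of_sqrt_one_sub_sq_mul_le (hx · |>.le) hε hTx
      fun n => hxα n t ht
  · exact ContinuousLinearMap.opNorm_le_of_sqrt_one_sub_sq_mul_le (hy · |>.le) hδ hTy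
      fun n => hyα n t ht

theorem stmt_7 {X Y : Type*} [NormedAddCommGroup X] [NormedSpace ℂ X] [CompleteSpace X]
    [NormedAddCommGroup Y] [NormedSpace ℂ Y] [CompleteSpace Y]
    (T A : X →L[ℂ] Y) (hT : T ≠ 0)
    (h : ∀ α : ℂ, ‖α‖ = 1 → α.arg ∈ Set.Ico 0 Real.pi →
      ∃ (x y : ℕ → X) (ε δ : ℕ → ℝ),
        (∀ n, ‖x n‖ = 1) ∧ (∀ n, ‖y n‖ = 1) ∧
        (∀ n, 0 < ε n) ∧ (∀ n, 0 < δ n) ∧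
        Tendsto ε atTop (𝓝 0) ∧ Tendsto δ atTop (𝓝 0) ∧
        Tendsto (fun n => ‖T (x n)‖) atTop (𝓝 ‖T‖) ∧
        Tendsto (fun n => ‖T (y n)‖) atTop (𝓝 ‖T‖) ∧
        (∀ n, ∀ t : ℝ, 0 ≤ t →
          ‖T (x n) + ((t : ℂ) * α) • A (x n)‖ ≥ Real.sqrt (1 - (ε n) ^ 2) * ‖T (x n)‖) ∧
        (∀ n, ∀ t : ℝ, t ≤ 0 →
          ‖T (y n) + ((t : ℂ) * α) • A (y n)‖ ≥ Real.sqrt (1 - (δ n) ^ 2) * ‖T (y n)‖)) :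
    ∀ lam : ℂ, ‖T + lam • A‖ ≥ ‖T‖ :=
  stmt_7_general T A h
end

section
/- Let X, Y be complex Banach spaces and T, A : X → Y bounded linear operators with T ≠ 0 and T ⊥_B A. Then either (a) there exists a sequence {xₙ} of unit vectors with ‖Txₙ‖ → ‖T‖ and ‖Axₙ‖ → 0, or (b) for each unimodular α with arg α ∈ [0,π) there exist sequences {xₙ}, {yₙ} of unit vectors and positive reals εₙ → 0, δₙ → 0 such that ‖Txₙ‖ → ‖T‖, ‖Tyₙ‖ → ‖T‖, and for all n: ‖Txₙ + tαAxₙ‖ ≥ √(1−εₙ²)‖Txₙ‖ for all t ≥ 0 and ‖Tyₙ + tαAyₙ‖ ≥ √(1−δₙ²)‖Tyₙ‖ for all t ≤ 0. -/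
open Filter Topology

/-!
If (a) fails, there is `d > 0` such that `‖A x‖ ≥ d` for every unit vector `x` with
`‖T x‖ > ‖T‖ - d`. Fix a unimodular `β` and a small `s > 0`. Since `‖T + sβA‖ ≥ ‖T‖`, some unit
vector `x` has `‖T x + sβ A x‖ > ‖T‖ - s²`; such an `x` almost norms `T`, so `‖A x‖ ≥ d`.
Convexity of `t ↦ ‖T x + tβ A x‖` bounds it below by `‖T x‖ - s t` for `t ≥ s`, while
`‖A x‖ ≥ d` makes it at least `‖T x‖` once `t ≥ 2‖T x‖ / d`. Hence it stays above
`‖T x‖ - O(s)` on all of `t ≥ 0`, and letting `s → 0` gives the sequence for `β = α`;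
`β = -α` gives the one for `t ≤ 0`.
-/

section Ray

variable {E : Type*} [SeminormedAddCommGroup E] [NormedSpace ℝ E]

lemma norm_sub_mul_le_norm_add_smul {u w : E} {s t : ℝ} (hs : 0 < s) (hst : s ≤ t)
    (hnear : ‖u‖ - s ^ 2 ≤ ‖u + s • w‖) : ‖u‖ - s * t ≤ ‖u + t • w‖ := by
  have ht : 0 < t := hs.trans_le hst
  have hconvex : t * ‖u + s • w‖ ≤ (t - s) * ‖u‖ + s * ‖u + t • w‖ := by
    have hsplit : t • (u + s • w) = (t - s) • u + s • (u + t • w) := by module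
    calc t * ‖u + s • w‖ = ‖t • (u + s • w)‖ := by rw [norm_smul, Real.norm_of_nonneg ht.le]
      _ ≤ ‖(t - s) • u‖ + ‖s • (u + t • w)‖ := hsplit ▸ norm_add_le _ _
      _ = (t - s) * ‖u‖ + s * ‖u + t • w‖ := by
        rw [norm_smul, norm_smul, Real.norm_of_nonneg (sub_nonneg.2 hst),
          Real.norm_of_nonneg hs.le]
  have : s * (‖u‖ - s * t) ≤ s * ‖u + t • w‖ := by
    nlinarith [mul_le_mul_of_nonneg_left hnear ht.le]
  exact le_of_mul_le_mul_left this hs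

lemma norm_sub_le_norm_add_smul_of_le_norm {u w : E} {d s t : ℝ} (hd : 0 < d) (hw : d ≤ ‖w‖)
    (hs : 0 < s) (hnear : ‖u‖ - s ^ 2 ≤ ‖u + s • w‖) (ht : 0 ≤ t) :
    ‖u‖ - s * (‖w‖ + 2 * ‖u‖ / d) ≤ ‖u + t • w‖ := by
  have hbend : 0 ≤ s * (2 * ‖u‖ / d) := by positivity
  have htw : ‖t • w‖ = t * ‖w‖ := by rw [norm_smul, Real.norm_of_nonneg ht]
  rcases le_total t s with hts | hst
  · have := norm_sub_le_norm_add u (t • w)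
    nlinarith [mul_le_mul_of_nonneg_right hts (norm_nonneg w)]
  rcases le_total t (2 * ‖u‖ / d) with htd | htd
  · have := norm_sub_mul_le_norm_add_smul hs hst hnear
    nlinarith [mul_le_mul_of_nonneg_left htd hs.le, mul_nonneg hs.le (norm_nonneg w)]
  · have := norm_sub_le_norm_add (t • w) u
    have hdt : 2 * ‖u‖ ≤ t * d := (div_le_iff₀ hd).1 htd
    rw [add_comm] at this
    nlinarith [mul_le_mul_of_nonneg_left hw ht, mul_nonneg hs.le (norm_nonneg w)]

end Ray

lemma exists_tendsto_zero_sqrt_one_sub_sq_mul_le {a b : ℕ → ℝ} {L : ℝ} (ha : ∀ n, 0 < a n)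
    (hb : ∀ n, 0 < b n) (haL : Tendsto a atTop (𝓝 L)) (hL : L ≠ 0)
    (hb0 : Tendsto b atTop (𝓝 0)) :
    ∃ ε : ℕ → ℝ, (∀ n, 0 < ε n) ∧ Tendsto ε atTop (𝓝 0) ∧
      ∀ n, √(1 - ε n ^ 2) * a n ≤ max 0 (a n - b n) := by
  -- `r ↦ √(1 - r ^ 2)` is an involution of `[0, 1]`, so `ε n := √(1 - r n ^ 2)` recovers `r n`.
  set r : ℕ → ℝ := fun n => max 0 (1 - b n / a n)
  have hr0 : ∀ n, 0 ≤ r n := fun n => le_max_left _ _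
  have hr1 : ∀ n, r n < 1 := fun n =>
    max_lt one_pos (sub_lt_self _ (div_pos (hb n) (ha n)))
  have hr : Tendsto r atTop (𝓝 1) := by
    have := (tendsto_const_nhds (x := (0 : ℝ))).max
      ((tendsto_const_nhds (x := (1 : ℝ))).sub (hb0.div haL hL))
    rwa [zero_div, sub_zero, max_eq_right zero_le_one] at this
  refine ⟨fun n => √(1 - r n ^ 2), fun n => Real.sqrt_pos.2 (by nlinarith [hr0 n, hr1 n]),
    by simpa using ((tendsto_const_nhds (x := (1 : ℝ))).sub (hr.pow 2)).sqrt, fun n => le_of_eq ?_⟩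
  rw [Real.sq_sqrt (by nlinarith [hr0 n, hr1 n]), sub_sub_cancel, Real.sqrt_sq (hr0 n),
    max_mul_of_nonneg _ _ (ha n).le, zero_mul, sub_mul, one_mul,
    div_mul_cancel₀ _ (ha n).ne']

lemma ContinuousLinearMap.exists_norm_eq_one_lt_apply_of_lt_opNorm {𝕜 E F : Type*} [RCLike 𝕜]
    [NormedAddCommGroup E] [SeminormedAddCommGroup F] [NormedSpace 𝕜 E] [NormedSpace 𝕜 F]
    (f : E →L[𝕜] F) {r : ℝ} (hr0 : 0 ≤ r) (hr : r < ‖f‖) : ∃ x, ‖x‖ = 1 ∧ r < ‖f x‖ := by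
  lift r to NNReal using hr0
  obtain ⟨x, hx, hfx⟩ := f.exists_nnnorm_eq_one_lt_apply_of_lt_opNNNorm (r := r) hr
  exact ⟨x, congrArg NNReal.toReal hx, hfx⟩

section Operators

variable {X Y : Type*} [NormedAddCommGroup X] [NormedSpace ℂ X]
  [NormedAddCommGroup Y] [NormedSpace ℂ Y] {T A : X →L[ℂ] Y}

lemma exists_seq_norm_apply_tendsto_of_forall_pos
    (h : ∀ d > 0, ∃ x : X, ‖x‖ = 1 ∧ ‖T‖ - d < ‖T x‖ ∧ ‖A x‖ < d) :
    ∃ x : ℕ → X, (∀ n, ‖x n‖ = 1) ∧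
      Tendsto (fun n => ‖T (x n)‖) atTop (𝓝 ‖T‖) ∧
      Tendsto (fun n => ‖A (x n)‖) atTop (𝓝 0) := by
  choose x hx1 hTx hAx using fun n : ℕ => h (1 / (n + 1)) Nat.one_div_pos_of_nat
  have h0 : Tendsto (fun n : ℕ => 1 / ((n : ℝ) + 1)) atTop (𝓝 0) :=
    tendsto_one_div_add_atTop_nhds_zero_nat
  refine ⟨x, hx1, ?_, ?_⟩
  · refine tendsto_of_tendsto_of_tendsto_of_le_of_le (by simpa using h0.const_sub ‖T‖)
      tendsto_const_nhds (fun n => (hTx n).le) fun n => ?_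
    exact T.unit_le_opNorm _ (hx1 n).le
  · exact squeeze_zero (fun n => norm_nonneg _) (fun n => (hAx n).le) h0

variable {d : ℝ}

lemma exists_norm_eq_one_forall_nonneg_norm_sub_le
    (horth : ∀ lam : ℂ, ‖T‖ ≤ ‖T + lam • A‖) (hd : 0 < d)
    (hA : ∀ x : X, ‖x‖ = 1 → ‖T‖ - d < ‖T x‖ → d ≤ ‖A x‖) {β : ℂ} (hβ : ‖β‖ = 1)
    {s : ℝ} (hs : 0 < s) (hsd : s * (s + ‖A‖) < d) (hsT : s * (s + ‖A‖) < ‖T‖) :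
    ∃ x : X, ‖x‖ = 1 ∧ ‖T‖ - s * (s + ‖A‖) ≤ ‖T x‖ ∧
      ∀ t : ℝ, 0 ≤ t → ‖T x‖ - s * (‖A‖ + 2 * ‖T‖ / d) ≤ ‖T x + ((t : ℂ) * β) • A x‖ := by
  have hsA : 0 ≤ s * ‖A‖ := by positivity
  obtain ⟨x, hx1, hx⟩ := (T + ((s : ℂ) * β) • A).exists_norm_eq_one_lt_apply_of_lt_opNorm
    (r := ‖T‖ - s ^ 2) (by nlinarith) (by nlinarith [horth ((s : ℂ) * β)])
  set w := β • A x
  have hray : ∀ t : ℝ, T x + ((t : ℂ) * β) • A x = T x + t • w := fun t => by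
    rw [mul_smul, Complex.coe_smul]
  rw [add_apply, smul_apply, hray] at hx
  have hw : ‖w‖ = ‖A x‖ := by rw [norm_smul, hβ, one_mul]
  have hAx : ‖A x‖ ≤ ‖A‖ := A.unit_le_opNorm x hx1.le
  have hTx : ‖T x‖ ≤ ‖T‖ := T.unit_le_opNorm x hx1.le
  have hnear : ‖T‖ - s * (s + ‖A‖) ≤ ‖T x‖ := by
    have := norm_add_le (T x) (s • w)
    rw [norm_smul, Real.norm_of_nonneg hs.le, hw] at this
    nlinarith [mul_le_mul_of_nonneg_left hAx hs.le]
  refine ⟨x, hx1, hnear, fun t ht => ?_⟩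
  have hdw : d ≤ ‖w‖ := hw ▸ hA x hx1 (by linarith)
  calc ‖T x‖ - s * (‖A‖ + 2 * ‖T‖ / d) ≤ ‖T x‖ - s * (‖w‖ + 2 * ‖T x‖ / d) := by
        gcongr
        exact hw ▸ hAx
    _ ≤ ‖T x + ((t : ℂ) * β) • A x‖ :=
        hray t ▸ norm_sub_le_norm_add_smul_of_le_norm hd hdw hs (by linarith) ht

lemma exists_seq_forall_nonneg_sqrt_one_sub_sq_mul_le (hT : T ≠ 0)
    (horth : ∀ lam : ℂ, ‖T‖ ≤ ‖T + lam • A‖) (hd : 0 < d)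
    (hA : ∀ x : X, ‖x‖ = 1 → ‖T‖ - d < ‖T x‖ → d ≤ ‖A x‖) {β : ℂ} (hβ : ‖β‖ = 1) :
    ∃ (x : ℕ → X) (ε : ℕ → ℝ), (∀ n, ‖x n‖ = 1) ∧ (∀ n, 0 < ε n) ∧
      Tendsto ε atTop (𝓝 0) ∧ Tendsto (fun n => ‖T (x n)‖) atTop (𝓝 ‖T‖) ∧
      ∀ n, ∀ t : ℝ, 0 ≤ t →
        √(1 - ε n ^ 2) * ‖T (x n)‖ ≤ ‖T (x n) + ((t : ℂ) * β) • A (x n)‖ := by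
  have hT0 : 0 < ‖T‖ := norm_pos_iff.2 hT
  have hquad : Tendsto (fun s : ℝ => s * (s + ‖A‖)) (𝓝[>] 0) (𝓝 0) := by
    have : Continuous fun s : ℝ => s * (s + ‖A‖) := by fun_prop
    simpa using this.continuousWithinAt.tendsto (s := Set.Ioi 0) (x := 0)
  obtain ⟨s₀, hs₀, hs₀0⟩ :=
    ((hquad.eventually (gt_mem_nhds (lt_min hd hT0))).and self_mem_nhdsWithin).exists
  set s : ℕ → ℝ := fun n => s₀ * (1 / (n + 1))
  have hs : ∀ n, 0 < s n := fun n => mul_pos hs₀0 Nat.one_div_pos_of_nat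
  have hss₀ : ∀ n, s n * (s n + ‖A‖) < min d ‖T‖ := fun n => by
    have : s n ≤ s₀ :=
      mul_le_of_le_one_right hs₀0.le ((Nat.one_div_le_one_div (Nat.zero_le n)).trans_eq (by simp))
    exact lt_of_le_of_lt (by gcongr) hs₀
  choose x hx1 hTx hray using fun n => exists_norm_eq_one_forall_nonneg_norm_sub_le horth hd hA
    hβ (hs n) ((hss₀ n).trans_le (min_le_left _ _)) ((hss₀ n).trans_le (min_le_right _ _))
  have hs0 : Tendsto s atTop (𝓝 0) := by
    have := tendsto_one_div_add_atTop_nhds_zero_nat.const_mul s₀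
    rwa [mul_zero] at this
  have hTx_tendsto : Tendsto (fun n => ‖T (x n)‖) atTop (𝓝 ‖T‖) :=
    tendsto_of_tendsto_of_tendsto_of_le_of_le
      (by simpa using (hs0.mul (hs0.add_const ‖A‖)).const_sub ‖T‖) tendsto_const_nhds hTx
      fun n => T.unit_le_opNorm _ (hx1 n).le
  have hc : 0 < ‖A‖ + 2 * ‖T‖ / d := by positivity
  obtain ⟨ε, hε, hε0, hεx⟩ := exists_tendsto_zero_sqrt_one_sub_sq_mul_le
    (fun n => (sub_pos.2 ((hss₀ n).trans_le (min_le_right _ _))).trans_le (hTx n))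
    (fun n => mul_pos (hs n) hc) hTx_tendsto hT0.ne' (by simpa using hs0.mul_const _)
  exact ⟨x, ε, hx1, hε, hε0, hTx_tendsto, fun n t ht =>
    (hεx n).trans (max_le (norm_nonneg _) (hray n t ht))⟩

end Operators

theorem stmt_8_general {X Y : Type*} [NormedAddCommGroup X] [NormedSpace ℂ X]
    [NormedAddCommGroup Y] [NormedSpace ℂ Y]
    (T A : X →L[ℂ] Y) (hT : T ≠ 0)
    (horth : ∀ lam : ℂ, ‖T + lam • A‖ ≥ ‖T‖) :
    (∃ x : ℕ → X, (∀ n, ‖x n‖ = 1) ∧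
      Tendsto (fun n => ‖T (x n)‖) atTop (𝓝 ‖T‖) ∧
      Tendsto (fun n => ‖A (x n)‖) atTop (𝓝 0)) ∨
    (∀ α : ℂ, ‖α‖ = 1 → α.arg ∈ Set.Ico 0 Real.pi →
      ∃ (x y : ℕ → X) (ε δ : ℕ → ℝ),
        (∀ n, ‖x n‖ = 1) ∧ (∀ n, ‖y n‖ = 1) ∧
        (∀ n, 0 < ε n) ∧ (∀ n, 0 < δ n) ∧
        Tendsto ε atTop (𝓝 0) ∧ Tendsto δ atTop (𝓝 0) ∧
        Tendsto (fun n => ‖T (x n)‖) atTop (𝓝 ‖T‖) ∧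
        Tendsto (fun n => ‖T (y n)‖) atTop (𝓝 ‖T‖) ∧
        (∀ n, ∀ t : ℝ, 0 ≤ t →
          ‖T (x n) + ((t : ℂ) * α) • A (x n)‖ ≥ Real.sqrt (1 - (ε n) ^ 2) * ‖T (x n)‖) ∧
        (∀ n, ∀ t : ℝ, t ≤ 0 →
          ‖T (y n) + ((t : ℂ) * α) • A (y n)‖ ≥ Real.sqrt (1 - (δ n) ^ 2) * ‖T (y n)‖)) := by
  by_cases hsmall : ∀ d > 0, ∃ x : X, ‖x‖ = 1 ∧ ‖T‖ - d < ‖T x‖ ∧ ‖A x‖ < d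
  · exact Or.inl (exists_seq_norm_apply_tendsto_of_forall_pos hsmall)
  push Not at hsmall
  obtain ⟨d, hd, hA⟩ := hsmall
  refine Or.inr fun α hα _ => ?_
  obtain ⟨x, ε, hx1, hε, hε0, hTx, hx⟩ :=
    exists_seq_forall_nonneg_sqrt_one_sub_sq_mul_le hT horth hd hA hα
  obtain ⟨y, δ, hy1, hδ, hδ0, hTy, hy⟩ :=
    exists_seq_forall_nonneg_sqrt_one_sub_sq_mul_le hT horth hd hA (β := -α) (by rwa [norm_neg])
  refine ⟨x, y, ε, δ, hx1, hy1, hε, hδ, hε0, hδ0, hTx, hTy, hx, fun n t ht => ?_⟩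
  have hneg : ((-t : ℝ) : ℂ) * -α = t * α := by push_cast; ring
  simpa only [hneg] using hy n (-t) (neg_nonneg.2 ht)

theorem stmt_8 {X Y : Type*} [NormedAddCommGroup X] [NormedSpace ℂ X] [CompleteSpace X]
    [NormedAddCommGroup Y] [NormedSpace ℂ Y] [CompleteSpace Y]
    (T A : X →L[ℂ] Y) (hT : T ≠ 0)
    (horth : ∀ lam : ℂ, ‖T + lam • A‖ ≥ ‖T‖) :
    (∃ x : ℕ → X, (∀ n, ‖x n‖ = 1) ∧
      Tendsto (fun n => ‖T (x n)‖) atTop (𝓝 ‖T‖) ∧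
      Tendsto (fun n => ‖A (x n)‖) atTop (𝓝 0)) ∨
    (∀ α : ℂ, ‖α‖ = 1 → α.arg ∈ Set.Ico 0 Real.pi →
      ∃ (x y : ℕ → X) (ε δ : ℕ → ℝ),
        (∀ n, ‖x n‖ = 1) ∧ (∀ n, ‖y n‖ = 1) ∧
        (∀ n, 0 < ε n) ∧ (∀ n, 0 < δ n) ∧
        Tendsto ε atTop (𝓝 0) ∧ Tendsto δ atTop (𝓝 0) ∧
        Tendsto (fun n => ‖T (x n)‖) atTop (𝓝 ‖T‖) ∧
        Tendsto (fun n => ‖T (y n)‖) atTop (𝓝 ‖T‖) ∧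
        (∀ n, ∀ t : ℝ, 0 ≤ t →
          ‖T (x n) + ((t : ℂ) * α) • A (x n)‖ ≥ Real.sqrt (1 - (ε n) ^ 2) * ‖T (x n)‖) ∧
        (∀ n, ∀ t : ℝ, t ≤ 0 →
          ‖T (y n) + ((t : ℂ) * α) • A (y n)‖ ≥ Real.sqrt (1 - (δ n) ^ 2) * ‖T (y n)‖)) :=
  stmt_8_general T A hT horth
end

section
/- Let X be a complex Banach space, x, y ∈ X, and θ ∈ [0, π] with α = e^{iθ}. If ‖x + tαy‖ ≥ ‖x‖ for all t ≥ 0, then either ‖x + tβy‖ ≥ ‖x‖ for all t ≥ 0 and all unimodular β with arg β ∈ [0, θ], or ‖x + tβy‖ ≥ ‖x‖ for all t ≥ 0 and all unimodular β with arg β ∈ [θ, π]. -/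
/-!
The set of `z : ℂ` with `‖x + z • y‖ < ‖x‖` is convex, and by hypothesis it misses the ray through
`α = exp (θ I)`. If both alternatives failed, it would contain points `t₁ β₁` and `t₂ β₂` with
`0 ≤ arg β₁ ≤ θ ≤ arg β₂ ≤ π`; as the angle between them is at most `π` and the ray lies inside it,
the segment joining them meets the ray, a contradiction. Explicitly,
`sin (c - b) e^{ia} + sin (b - a) e^{ic} = sin (c - a) e^{ib}` gives the point of intersection.
-/

open Complex

lemma sin_mul_exp_add_sin_mul_exp (a b c : ℝ) :
    (Real.sin (c - b) : ℂ) * exp (a * I) + (Real.sin (b - a) : ℂ) * exp (c * I)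
      = (Real.sin (c - a) : ℂ) * exp (b * I) := by
  simp only [ofReal_sin, Complex.sin, ofReal_sub, sub_mul, neg_mul, exp_sub, exp_neg]
  have ha := exp_ne_zero (a * I)
  have hb := exp_ne_zero (b * I)
  have hc := exp_ne_zero (c * I)
  field_simp
  ring

lemma exists_ofReal_mul_exp_mem_segment_of_lt {a b c t₁ t₂ : ℝ} (hab : a < b) (hbc : b < c)
    (hac : c - a ≤ Real.pi) (ht₁ : 0 < t₁) (ht₂ : 0 < t₂) :
    ∃ s : ℝ, 0 ≤ s ∧
      (s : ℂ) * exp (b * I) ∈ segment ℝ ((t₁ : ℂ) * exp (a * I)) ((t₂ : ℂ) * exp (c * I)) := by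
  have hu : 0 < t₁ * Real.sin (b - a) :=
    mul_pos ht₁ (Real.sin_pos_of_pos_of_lt_pi (by linarith) (by linarith))
  have hv : 0 < t₂ * Real.sin (c - b) :=
    mul_pos ht₂ (Real.sin_pos_of_pos_of_lt_pi (by linarith) (by linarith))
  set w := t₁ * Real.sin (b - a) + t₂ * Real.sin (c - b)
  have hw : 0 < w := add_pos hu hv
  refine ⟨t₁ * t₂ * Real.sin (c - a) / w,
    div_nonneg (mul_nonneg (by positivity)
      (Real.sin_nonneg_of_nonneg_of_le_pi (by linarith) hac)) hw.le,
    t₂ * Real.sin (c - b) / w, t₁ * Real.sin (b - a) / w,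
    by positivity, by positivity, by field_simp; ring, ?_⟩
  have hw' : (w : ℂ) ≠ 0 := ofReal_ne_zero.mpr hw.ne'
  have key := sin_mul_exp_add_sin_mul_exp a b c
  simp only [real_smul, w] at hw' ⊢
  push_cast at hw' key ⊢
  field_simp
  linear_combination (t₁ : ℂ) * t₂ * key

lemma exists_ofReal_mul_exp_mem_segment {a b c t₁ t₂ : ℝ} (hab : a ≤ b) (hbc : b ≤ c)
    (hac : c - a ≤ Real.pi) (ht₁ : 0 ≤ t₁) (ht₂ : 0 ≤ t₂) :
    ∃ s : ℝ, 0 ≤ s ∧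
      (s : ℂ) * exp (b * I) ∈ segment ℝ ((t₁ : ℂ) * exp (a * I)) ((t₂ : ℂ) * exp (c * I)) := by
  rcases hab.lt_or_eq with hab | rfl
  · rcases hbc.lt_or_eq with hbc | rfl
    · rcases ht₁.lt_or_eq with ht₁ | rfl
      · rcases ht₂.lt_or_eq with ht₂ | rfl
        · exact exists_ofReal_mul_exp_mem_segment_of_lt hab hbc hac ht₁ ht₂
        · exact ⟨0, le_rfl, by simpa using right_mem_segment ℝ _ _⟩
      · exact ⟨0, le_rfl, by simpa using left_mem_segment ℝ _ _⟩
    · exact ⟨t₂, ht₂, right_mem_segment ℝ _ _⟩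
  · exact ⟨t₁, ht₁, left_mem_segment ℝ _ _⟩

lemma convexOn_norm_add_smul {X : Type*} [SeminormedAddCommGroup X] [NormedSpace ℂ X]
    (x y : X) : ConvexOn ℝ Set.univ fun z : ℂ => ‖x + z • y‖ := by
  refine ⟨convex_univ, fun z₁ _ z₂ _ p q hp hq hpq => ?_⟩
  have hsplit : x + (p • z₁ + q • z₂) • y = p • (x + z₁ • y) + q • (x + z₂ • y) := by
    rw [real_smul, real_smul]
    linear_combination (norm := module) -hpq • x
  calc ‖x + (p • z₁ + q • z₂) • y‖
      ≤ ‖p • (x + z₁ • y)‖ + ‖q • (x + z₂ • y)‖ := hsplit ▸ norm_add_le _ _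
    _ = p • ‖x + z₁ • y‖ + q • ‖x + z₂ • y‖ := by
      rw [norm_smul_of_nonneg hp, norm_smul_of_nonneg hq, smul_eq_mul, smul_eq_mul]

theorem stmt_10_general {X : Type*} [NormedAddCommGroup X] [NormedSpace ℂ X]
    (x y : X) (θ : ℝ)
    (h : ∀ t : ℝ, 0 ≤ t → ‖x + ((t : ℂ) * Complex.exp (θ * Complex.I)) • y‖ ≥ ‖x‖) :
    (∀ β : ℂ, ‖β‖ = 1 → β.arg ∈ Set.Icc 0 θ →
        ∀ t : ℝ, 0 ≤ t → ‖x + ((t : ℂ) * β) • y‖ ≥ ‖x‖) ∨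
    (∀ β : ℂ, ‖β‖ = 1 → β.arg ∈ Set.Icc θ Real.pi →
        ∀ t : ℝ, 0 ≤ t → ‖x + ((t : ℂ) * β) • y‖ ≥ ‖x‖) := by
  by_contra hcon
  simp only [not_or, not_forall, not_le] at hcon
  obtain ⟨⟨β₁, hβ₁, ⟨ha, haθ⟩, t₁, ht₁, hlt₁⟩, ⟨β₂, hβ₂, ⟨hθc, hc⟩, t₂, ht₂, hlt₂⟩⟩ := hcon
  obtain ⟨s, hs, hmem⟩ := exists_ofReal_mul_exp_mem_segment haθ hθc (by linarith) ht₁ ht₂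
  have exp_arg_mul_I (β : ℂ) (hβ : ‖β‖ = 1) : exp (β.arg * I) = β := by
    simpa [hβ] using norm_mul_exp_arg_mul_I β
  rw [exp_arg_mul_I β₁ hβ₁, exp_arg_mul_I β₂ hβ₂] at hmem
  exact (h s hs).not_gt
    (((convexOn_norm_add_smul x y).convex_lt ‖x‖).segment_subset ⟨trivial, hlt₁⟩ ⟨trivial, hlt₂⟩
      hmem).2

theorem stmt_10 {X : Type*} [NormedAddCommGroup X] [NormedSpace ℂ X] [CompleteSpace X]
    (x y : X) (θ : ℝ) (hθ : θ ∈ Set.Icc 0 Real.pi)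
    (h : ∀ t : ℝ, 0 ≤ t → ‖x + ((t : ℂ) * Complex.exp (θ * Complex.I)) • y‖ ≥ ‖x‖) :
    (∀ β : ℂ, ‖β‖ = 1 → β.arg ∈ Set.Icc 0 θ →
        ∀ t : ℝ, 0 ≤ t → ‖x + ((t : ℂ) * β) • y‖ ≥ ‖x‖) ∨
    (∀ β : ℂ, ‖β‖ = 1 → β.arg ∈ Set.Icc θ Real.pi →
        ∀ t : ℝ, 0 ≤ t → ‖x + ((t : ℂ) * β) • y‖ ≥ ‖x‖) :=
  stmt_10_general x y θ h
end

section
/- Let X be a finite-dimensional complex Banach space and T a linear operator on X such that M_T (the set of unit vectors at which T attains its norm) is a closed connected subset of the unit sphere. Then for any linear operator A on X, T ⊥_B A if and only if for each unimodular α with arg α ∈ [0, π) there exists x ∈ M_T (depending on α) such that ‖Tx + tαAx‖ ≥ ‖Tx‖ for all t ∈ ℝ. -/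
open Complex

section Aux

variable {X : Type*} [NormedAddCommGroup X] [NormedSpace ℂ X] [FiniteDimensional ℂ X]

lemma combo (c d : X) (θ a b : ℂ) :
    θ • (c + a • d) + (1 - θ) • (c + b • d) = c + (θ * a + (1 - θ) * b) • d := by
  module

lemma norm_coe_nn {r : ℝ} (hr : 0 ≤ r) : ‖(r : ℂ)‖ = r := by
  rw [Complex.norm_real, Real.norm_eq_abs, _root_.abs_of_nonneg hr]

lemma norm_one_sub_coe {θ : ℝ} (hθ : θ ≤ 1) : ‖(1 - (θ : ℂ))‖ = 1 - θ := by
  rw [show (1 - (θ : ℂ)) = ((1 - θ : ℝ) : ℂ) by push_cast; ring]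
  exact norm_coe_nn (by linarith)

/-- convexity step: from `‖c + s•d‖ < M`, `‖c‖ ≤ M`, `0 < t ≤ s`, get `‖c + t•d‖ < M`. -/
lemma lemB (c d : X) {s t M : ℝ} (ht : 0 < t) (hts : t ≤ s) (hc : ‖c‖ ≤ M)
    (hs : ‖c + (s : ℂ) • d‖ < M) : ‖c + (t : ℂ) • d‖ < M := by
  have hs0 : 0 < s := lt_of_lt_of_le ht hts
  set θ : ℝ := t / s with hθ
  have hθ0 : 0 < θ := div_pos ht hs0
  have hθ1 : θ ≤ 1 := (div_le_one hs0).2 hts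
  have hkey : (θ : ℂ) • (c + (s : ℂ) • d) + (1 - (θ : ℂ)) • (c + (0 : ℂ) • d)
      = c + ((t : ℂ)) • d := by
    rw [combo]
    have hr' : θ * s = t := by
      rw [hθ]; field_simp
    have : (θ : ℂ) * s + (1 - θ) * 0 = (t : ℂ) := by
      rw [show (θ : ℂ) * s + (1 - θ) * 0 = ((θ * s : ℝ) : ℂ) by push_cast; ring, hr']
    rw [this]
  rw [← hkey]
  calc ‖(θ : ℂ) • (c + (s : ℂ) • d) + (1 - (θ : ℂ)) • (c + (0 : ℂ) • d)‖
      ≤ ‖(θ : ℂ) • (c + (s : ℂ) • d)‖ + ‖(1 - (θ : ℂ)) • (c + (0 : ℂ) • d)‖ := norm_add_le _ _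
    _ = θ * ‖c + (s : ℂ) • d‖ + (1 - θ) * ‖c‖ := by
        rw [norm_smul, norm_smul, norm_coe_nn (le_of_lt hθ0), norm_one_sub_coe hθ1]
        simp
    _ < θ * M + (1 - θ) * M := by
        have : (1 - θ) * ‖c‖ ≤ (1 - θ) * M := by
          apply mul_le_mul_of_nonneg_left hc (by linarith)
        have h2 : θ * ‖c + (s : ℂ) • d‖ < θ * M := by
          exact mul_lt_mul_of_pos_left hs hθ0
        linarith
    _ = M := by ring

/-- convexity dichotomy: can't dip below `‖c‖` on both sides of 0. -/
lemma lemA (c d : X) {t1 t2 : ℝ} (h1 : 0 < t1) (h2 : t2 < 0)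
    (H1 : ‖c + (t1 : ℂ) • d‖ < ‖c‖) (H2 : ‖c + (t2 : ℂ) • d‖ < ‖c‖) : False := by
  set θ : ℝ := t1 / (t1 - t2) with hθ
  have hden : 0 < t1 - t2 := by linarith
  have hθ0 : 0 < θ := div_pos h1 hden
  have hθ1 : θ < 1 := (div_lt_one hden).2 (by linarith)
  have hkey : (θ : ℂ) • (c + (t2 : ℂ) • d) + (1 - (θ : ℂ)) • (c + (t1 : ℂ) • d) = c := by
    rw [combo]
    have hd : t1 - t2 ≠ 0 := ne_of_gt hden
    have hr' : θ * t2 + (1 - θ) * t1 = 0 := by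
      rw [hθ]; field_simp; ring
    have : (θ : ℂ) * t2 + (1 - θ) * t1 = 0 := by
      rw [show (θ : ℂ) * t2 + (1 - θ) * t1 = ((θ * t2 + (1 - θ) * t1 : ℝ) : ℂ) by
        push_cast; ring, hr']
      simp
    rw [this, zero_smul, add_zero]
  have : ‖c‖ < ‖c‖ := by
    conv_lhs => rw [← hkey]
    calc ‖(θ : ℂ) • (c + (t2 : ℂ) • d) + (1 - (θ : ℂ)) • (c + (t1 : ℂ) • d)‖
        ≤ ‖(θ : ℂ) • (c + (t2 : ℂ) • d)‖ + ‖(1 - (θ : ℂ)) • (c + (t1 : ℂ) • d)‖ :=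
          norm_add_le _ _
      _ = θ * ‖c + (t2 : ℂ) • d‖ + (1 - θ) * ‖c + (t1 : ℂ) • d‖ := by
          rw [norm_smul, norm_smul, norm_coe_nn (le_of_lt hθ0),
            norm_one_sub_coe (le_of_lt hθ1)]
      _ < θ * ‖c‖ + (1 - θ) * ‖c‖ := by
          have := mul_lt_mul_of_pos_left H2 hθ0
          have := mul_lt_mul_of_pos_left H1 (by linarith : (0:ℝ) < 1 - θ)
          linarith
      _ = ‖c‖ := by ring
  exact lt_irrefl _ this

/-- nonemptiness of `M⁺`. -/
lemma exists_plus (T B : X →L[ℂ] X) (hne : ∃ x : X, ‖x‖ = 1)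
    (h : ∀ t : ℝ, 0 < t → ‖T‖ ≤ ‖T + (t : ℂ) • B‖) :
    ∃ x : X, ‖x‖ = 1 ∧ ‖T x‖ = ‖T‖ ∧ ∀ t : ℝ, 0 ≤ t → ‖T‖ ≤ ‖T x + (t : ℂ) • B x‖ := by
  by_contra hcon
  push_neg at hcon
  -- for every unit vector, some positive t dips below ‖T‖
  have hch : ∀ x : X, ‖x‖ = 1 → ∃ t : ℝ, 0 < t ∧ ‖T x + (t : ℂ) • B x‖ < ‖T‖ := by
    intro x hx
    by_cases hMx : ‖T x‖ = ‖T‖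
    · obtain ⟨t, ht0, htlt⟩ := hcon x hx hMx
      refine ⟨t, ?_, htlt⟩
      rcases lt_or_eq_of_le ht0 with h' | h'
      · exact h'
      · exfalso
        rw [← h'] at htlt
        simp only [Complex.ofReal_zero, zero_smul, add_zero] at htlt
        rw [hMx] at htlt
        exact lt_irrefl _ htlt
    · have hTx : ‖T x‖ < ‖T‖ := by
        have h1 : ‖T x‖ ≤ ‖T‖ := by
          calc ‖T x‖ ≤ ‖T‖ * ‖x‖ := T.le_opNorm x
            _ = ‖T‖ := by rw [hx, mul_one]
        exact lt_of_le_of_ne h1 hMx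
      refine ⟨(‖T‖ - ‖T x‖) / (‖B x‖ + 1), ?_, ?_⟩
      · apply div_pos (by linarith) (by positivity)
      · set t := (‖T‖ - ‖T x‖) / (‖B x‖ + 1) with htd
        have ht0 : 0 < t := div_pos (by linarith) (by positivity)
        calc ‖T x + (t : ℂ) • B x‖ ≤ ‖T x‖ + ‖(t : ℂ) • B x‖ := norm_add_le _ _
          _ = ‖T x‖ + t * ‖B x‖ := by
              rw [norm_smul, norm_coe_nn (le_of_lt ht0)]
          _ < ‖T x‖ + t * (‖B x‖ + 1) := by nlinarith
          _ = ‖T x‖ + (‖T‖ - ‖T x‖) := by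
              rw [htd, div_mul_cancel₀]
              positivity
          _ = ‖T‖ := by ring
  classical
  -- choice of dip parameter
  set tf : X → ℝ := fun x => if hx : ‖x‖ = 1 then (hch x hx).choose else 1 with htf
  have htf_pos : ∀ x : X, ‖x‖ = 1 → 0 < tf x := by
    intro x hx; rw [htf]; simp only [hx, dif_pos]; exact (hch x hx).choose_spec.1
  have htf_lt : ∀ x : X, ‖x‖ = 1 → ‖T x + (tf x : ℂ) • B x‖ < ‖T‖ := by
    intro x hx; rw [htf]; simp only [hx, dif_pos]; exact (hch x hx).choose_spec.2
  set U : X → Set X := fun x => {y : X | ‖T y + (tf x : ℂ) • B y‖ < ‖T‖} with hU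
  have hUopen : ∀ x : X, IsOpen (U x) := by
    intro x
    have hcont : Continuous fun y : X => ‖T y + (tf x : ℂ) • B y‖ :=
      (T.continuous.add (B.continuous.const_smul _)).norm
    exact isOpen_lt hcont continuous_const
  have hsph : IsCompact (Metric.sphere (0 : X) 1) := isCompact_sphere 0 1
  have hcover : Metric.sphere (0 : X) 1 ⊆ ⋃ x ∈ Metric.sphere (0 : X) 1, U x := by
    intro y hy
    simp only [Set.mem_iUnion]
    exact ⟨y, hy, htf_lt y (mem_sphere_zero_iff_norm.1 hy)⟩
  obtain ⟨b, hbsub, hbfin, hbcov⟩ := hsph.elim_finite_subcover_image (fun x _ => hUopen x) hcover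
  obtain ⟨x0, hx0⟩ := hne
  have hx0s : x0 ∈ Metric.sphere (0 : X) 1 := mem_sphere_zero_iff_norm.2 hx0
  have hbne : b.Nonempty := by
    rcases hbcov hx0s with h'
    simp only [Set.mem_iUnion] at h'
    obtain ⟨i, hi, _⟩ := h'
    exact ⟨i, hi⟩
  -- minimum of the finite family
  set t0 : ℝ := hbfin.toFinset.inf' (by simpa using hbne) tf with ht0d
  have ht0pos : 0 < t0 := by
    rw [ht0d]
    apply Finset.lt_inf'_iff _ |>.2
    intro i hi
    exact htf_pos i (mem_sphere_zero_iff_norm.1 (hbsub (hbfin.mem_toFinset.1 hi)))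
  have hkey : ∀ y : X, ‖y‖ = 1 → ‖T y + (t0 : ℂ) • B y‖ < ‖T‖ := by
    intro y hy
    have hys : y ∈ Metric.sphere (0 : X) 1 := mem_sphere_zero_iff_norm.2 hy
    rcases hbcov hys with h'
    simp only [Set.mem_iUnion] at h'
    obtain ⟨i, hib, hiy⟩ := h'
    have hile : t0 ≤ tf i := by
      rw [ht0d]
      exact Finset.inf'_le _ (hbfin.mem_toFinset.2 hib)
    have hTy : ‖T y‖ ≤ ‖T‖ := by
      calc ‖T y‖ ≤ ‖T‖ * ‖y‖ := T.le_opNorm y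
        _ = ‖T‖ := by rw [hy, mul_one]
    exact lemB (T y) (B y) ht0pos hile hTy hiy
  -- conclude ‖T + t0 • B‖ < ‖T‖, contradiction
  set F : X →L[ℂ] X := T + (t0 : ℂ) • B with hF
  have hFy : ∀ y : X, ‖y‖ = 1 → ‖F y‖ < ‖T‖ := by
    intro y hy
    have := hkey y hy
    simpa [hF] using this
  -- maximum on the sphere
  obtain ⟨y0, hy0s, hy0max⟩ := hsph.exists_isMaxOn ⟨x0, hx0s⟩
    (continuous_norm.comp F.continuous).continuousOn
  have hy0 : ‖y0‖ = 1 := mem_sphere_zero_iff_norm.1 hy0s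
  have hm : ‖F y0‖ < ‖T‖ := hFy y0 hy0
  have hFbound : ‖F‖ ≤ ‖F y0‖ := by
    apply ContinuousLinearMap.opNorm_le_bound _ (norm_nonneg _)
    intro x
    by_cases hx : x = 0
    · simp [hx]
    · have hxn : ‖x‖ ≠ 0 := norm_ne_zero_iff.2 hx
      set u : X := ((‖x‖⁻¹ : ℝ) : ℂ) • x with hu
      have hun : ‖u‖ = 1 := by
        rw [hu, norm_smul, norm_coe_nn (by positivity : (0:ℝ) ≤ ‖x‖⁻¹), inv_mul_cancel₀ hxn]
      have hus : u ∈ Metric.sphere (0 : X) 1 := mem_sphere_zero_iff_norm.2 hun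
      have hle : ‖F u‖ ≤ ‖F y0‖ := hy0max hus
      have hxu : x = ((‖x‖ : ℝ) : ℂ) • u := by
        rw [hu, smul_smul]
        rw [show ((‖x‖ : ℝ) : ℂ) * ((‖x‖⁻¹ : ℝ) : ℂ) = 1 by
          push_cast
          exact mul_inv_cancel₀ (Complex.ofReal_ne_zero.2 hxn)]
        rw [one_smul]
      calc ‖F x‖ = ‖F (((‖x‖ : ℝ) : ℂ) • u)‖ := by rw [← hxu]
        _ = ‖x‖ * ‖F u‖ := by
            rw [map_smul, norm_smul, norm_coe_nn (norm_nonneg x)]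
        _ ≤ ‖x‖ * ‖F y0‖ := by
            apply mul_le_mul_of_nonneg_left hle (norm_nonneg x)
        _ = ‖F y0‖ * ‖x‖ := by ring
  have : ‖T‖ ≤ ‖F‖ := h t0 ht0pos
  linarith

lemma arg_choice (z : ℂ) (hz : z ≠ 0) :
    z.arg ∈ Set.Ico 0 Real.pi ∨ (-z).arg ∈ Set.Ico 0 Real.pi := by
  have h1 : ∀ w : ℂ, (0 ≤ w.im ∧ ¬(w.re < 0 ∧ w.im = 0)) → w.arg ∈ Set.Ico 0 Real.pi := by
    rintro w ⟨h0, h1⟩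
    exact ⟨Complex.arg_nonneg_iff.2 h0,
      lt_of_le_of_ne (Complex.arg_le_pi w) (fun he => h1 (Complex.arg_eq_pi_iff.1 he))⟩
  rcases lt_trichotomy z.im 0 with him | him | him
  · right
    apply h1
    constructor
    · simp; linarith
    · rintro ⟨_, h⟩
      simp at h
      linarith
  · rcases lt_trichotomy z.re 0 with hre | hre | hre
    · right
      apply h1
      constructor
      · simp [him]
      · rintro ⟨h, _⟩
        simp at h
        linarith
    · exact absurd (Complex.ext hre him) hz
    · left
      apply h1
      exact ⟨le_of_eq him.symm, fun ⟨h, _⟩ => absurd h (not_lt.2 (le_of_lt hre))⟩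
  · left
    apply h1
    exact ⟨le_of_lt him, fun ⟨_, h⟩ => by rw [h] at him; exact lt_irrefl _ him⟩

end Aux

theorem stmt_13 {X : Type*} [NormedAddCommGroup X] [NormedSpace ℂ X] [FiniteDimensional ℂ X]
    (T A : X →L[ℂ] X)
    (hclosed : IsClosed {x : X | ‖x‖ = 1 ∧ ‖T x‖ = ‖T‖})
    (hconn : IsConnected {x : X | ‖x‖ = 1 ∧ ‖T x‖ = ‖T‖}) :
    (∀ lam : ℂ, ‖T + lam • A‖ ≥ ‖T‖) ↔
      (∀ α : ℂ, ‖α‖ = 1 → α.arg ∈ Set.Ico 0 Real.pi →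
        ∃ x : X, ‖x‖ = 1 ∧ ‖T x‖ = ‖T‖ ∧
          ∀ t : ℝ, ‖T x + ((t : ℂ) * α) • A x‖ ≥ ‖T x‖) := by
  obtain ⟨⟨x00, hx001, _⟩, hpre⟩ := hconn
  have hne : ∃ x : X, ‖x‖ = 1 := ⟨x00, hx001⟩
  constructor
  · -- forward direction
    intro h α hα _
    set B : X →L[ℂ] X := α • A with hB
    have happB : ∀ y : X, B y = α • A y := fun y => rfl
    have hplus : ∃ x : X, ‖x‖ = 1 ∧ ‖T x‖ = ‖T‖ ∧
        ∀ t : ℝ, 0 ≤ t → ‖T‖ ≤ ‖T x + (t : ℂ) • B x‖ := by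
      apply exists_plus T B hne
      intro t ht
      have := h ((t : ℂ) * α)
      rwa [mul_smul] at this
    have hminus : ∃ x : X, ‖x‖ = 1 ∧ ‖T x‖ = ‖T‖ ∧
        ∀ t : ℝ, 0 ≤ t → ‖T‖ ≤ ‖T x + (t : ℂ) • (-B) x‖ := by
      apply exists_plus T (-B) hne
      intro t ht
      have h2 := h ((-(t : ℂ)) * α)
      have heq : T + (-(t : ℂ) * α) • A = T + (t : ℂ) • (-B) := by
        rw [hB, mul_smul, neg_smul, ← smul_neg]
      rwa [heq] at h2
    set MT : Set X := {x : X | ‖x‖ = 1 ∧ ‖T x‖ = ‖T‖} with hMT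
    set Sp : Set X := {x : X | ∀ t : ℝ, 0 ≤ t → ‖T‖ ≤ ‖T x + (t : ℂ) • B x‖} with hSp
    set Sm : Set X := {x : X | ∀ t : ℝ, 0 ≤ t → ‖T‖ ≤ ‖T x + (t : ℂ) • (-B) x‖} with hSm
    have hSpc : IsClosed Sp := by
      have : Sp = ⋂ (t : ℝ), ⋂ (_ : 0 ≤ t), {x : X | ‖T‖ ≤ ‖T x + (t : ℂ) • B x‖} := by
        ext x; simp [hSp, Set.mem_iInter]
      rw [this]
      exact isClosed_iInter fun t => isClosed_iInter fun ht =>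
        isClosed_le continuous_const (T.continuous.add (B.continuous.const_smul _)).norm
    have hSmc : IsClosed Sm := by
      have : Sm = ⋂ (t : ℝ), ⋂ (_ : 0 ≤ t), {x : X | ‖T‖ ≤ ‖T x + (t : ℂ) • (-B) x‖} := by
        ext x; simp [hSm, Set.mem_iInter]
      rw [this]
      exact isClosed_iInter fun t => isClosed_iInter fun ht =>
        isClosed_le continuous_const (T.continuous.add ((-B).continuous.const_smul _)).norm
    have hcover : MT ⊆ Sp ∪ Sm := by
      intro x hx
      by_contra hcon
      simp only [Set.mem_union] at hcon
      push_neg at hcon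
      obtain ⟨hnp, hnm⟩ := hcon
      simp only [hSp, Set.mem_setOf_eq, not_forall] at hnp
      simp only [hSm, Set.mem_setOf_eq, not_forall] at hnm
      obtain ⟨t1, ht1, hlt1⟩ := hnp
      obtain ⟨t2, ht2, hlt2⟩ := hnm
      push_neg at hlt1 hlt2
      have hx2 : ‖T x‖ = ‖T‖ := hx.2
      have ht1pos : 0 < t1 := by
        rcases lt_or_eq_of_le ht1 with h' | h'
        · exact h'
        · exfalso; rw [← h'] at hlt1
          simp only [Complex.ofReal_zero, zero_smul, add_zero] at hlt1
          rw [hx2] at hlt1; exact lt_irrefl _ hlt1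
      have ht2pos : 0 < t2 := by
        rcases lt_or_eq_of_le ht2 with h' | h'
        · exact h'
        · exfalso; rw [← h'] at hlt2
          simp only [Complex.ofReal_zero, zero_smul, add_zero] at hlt2
          rw [hx2] at hlt2; exact lt_irrefl _ hlt2
      have H1 : ‖T x + (t1 : ℂ) • B x‖ < ‖T x‖ := by rw [hx2]; exact hlt1
      have H2 : ‖T x + ((-t2 : ℝ) : ℂ) • B x‖ < ‖T x‖ := by
        rw [hx2]
        have : ((-t2 : ℝ) : ℂ) • B x = (t2 : ℂ) • (-B) x := by
          push_cast
          rw [neg_smul]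
          simp [smul_neg]
        rw [this]
        exact hlt2
      exact lemA (T x) (B x) ht1pos (by linarith : (-t2 : ℝ) < 0) H1 H2
    obtain ⟨xp, hxp1, hxp2, hxp3⟩ := hplus
    obtain ⟨xm, hxm1, hxm2, hxm3⟩ := hminus
    have hint := isPreconnected_closed_iff.1 hpre Sp Sm hSpc hSmc hcover
      ⟨xp, ⟨hxp1, hxp2⟩, hxp3⟩ ⟨xm, ⟨hxm1, hxm2⟩, hxm3⟩
    obtain ⟨x, hxMT, hxSp, hxSm⟩ := hint
    refine ⟨x, hxMT.1, hxMT.2, ?_⟩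
    intro t
    have hBx : ((t : ℂ) * α) • A x = (t : ℂ) • B x := by
      rw [mul_smul, hB]
      rfl
    rw [hBx, hxMT.2]
    rcases le_or_gt 0 t with ht | ht
    · exact hxSp t ht
    · have h2 := hxSm (-t) (by linarith)
      have : ((-t : ℝ) : ℂ) • (-B) x = (t : ℂ) • B x := by
        push_cast
        rw [neg_smul]
        simp [smul_neg]
      rw [this] at h2
      exact h2
  · -- reverse direction
    intro h lam
    by_cases hlam : lam = 0
    · simp [hlam]
    · have hr : 0 < ‖lam‖ := norm_pos_iff.2 hlam
      rcases arg_choice lam hlam with hcase | hcase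
      · set α : ℂ := ((‖lam‖⁻¹ : ℝ) : ℂ) * lam with hαd
        have hne0 : ((‖lam‖ : ℝ) : ℂ) ≠ 0 := Complex.ofReal_ne_zero.2 (ne_of_gt hr)
        have hα1 : ‖α‖ = 1 := by
          rw [hαd, norm_mul, norm_coe_nn (by positivity : (0:ℝ) ≤ ‖lam‖⁻¹),
            inv_mul_cancel₀ (ne_of_gt hr)]
        have hαarg : α.arg ∈ Set.Ico 0 Real.pi := by
          rw [hαd, Complex.arg_real_mul lam (by positivity : (0:ℝ) < ‖lam‖⁻¹)]
          exact hcase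
        obtain ⟨x, hx1, hx2, hx3⟩ := h α hα1 hαarg
        have hlameq : ((‖lam‖ : ℝ) : ℂ) * α = lam := by
          rw [hαd]
          push_cast
          rw [show ((‖lam‖ : ℝ) : ℂ) * (((‖lam‖ : ℝ) : ℂ)⁻¹ * lam)
            = (((‖lam‖ : ℝ) : ℂ) * ((‖lam‖ : ℝ) : ℂ)⁻¹) * lam by ring,
            mul_inv_cancel₀ hne0, one_mul]
        have h3 := hx3 ‖lam‖
        rw [hlameq] at h3
        calc ‖T‖ = ‖T x‖ := hx2.symm
          _ ≤ ‖T x + lam • A x‖ := h3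
          _ = ‖(T + lam • A) x‖ := by simp
          _ ≤ ‖T + lam • A‖ * ‖x‖ := (T + lam • A).le_opNorm x
          _ = ‖T + lam • A‖ := by rw [hx1, mul_one]
      · set α : ℂ := ((‖lam‖⁻¹ : ℝ) : ℂ) * (-lam) with hαd
        have hne0 : ((‖lam‖ : ℝ) : ℂ) ≠ 0 := Complex.ofReal_ne_zero.2 (ne_of_gt hr)
        have hα1 : ‖α‖ = 1 := by
          rw [hαd, norm_mul, norm_coe_nn (by positivity : (0:ℝ) ≤ ‖lam‖⁻¹), norm_neg,
            inv_mul_cancel₀ (ne_of_gt hr)]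
        have hαarg : α.arg ∈ Set.Ico 0 Real.pi := by
          rw [hαd, Complex.arg_real_mul (-lam) (by positivity : (0:ℝ) < ‖lam‖⁻¹)]
          exact hcase
        obtain ⟨x, hx1, hx2, hx3⟩ := h α hα1 hαarg
        have hlameq : ((-‖lam‖ : ℝ) : ℂ) * α = lam := by
          rw [hαd]
          push_cast
          rw [show -((‖lam‖ : ℝ) : ℂ) * (((‖lam‖ : ℝ) : ℂ)⁻¹ * -lam)
            = (((‖lam‖ : ℝ) : ℂ) * ((‖lam‖ : ℝ) : ℂ)⁻¹) * lam by ring,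
            mul_inv_cancel₀ hne0, one_mul]
        have h3 := hx3 (-‖lam‖)
        rw [hlameq] at h3
        calc ‖T‖ = ‖T x‖ := hx2.symm
          _ ≤ ‖T x + lam • A x‖ := h3
          _ = ‖(T + lam • A) x‖ := by simp
          _ ≤ ‖T + lam • A‖ * ‖x‖ := (T + lam • A).le_opNorm x
          _ = ‖T + lam • A‖ := by rw [hx1, mul_one]
end

section
/- Let X be a complex Banach space, T ≠ 0 a bounded linear operator on X, x a unit vector with ‖Tx‖ = ‖T‖, and α a unimodular complex number. If y ∈ x_α^+ \ x_α^⊥ (i.e., ‖x + tαy‖ ≥ ‖x‖ for all t ≥ 0 but ‖x + t₀αy‖ < ‖x‖ for some t₀ < 0), then Ty ∈ (Tx)_α^+ \ (Tx)_α^⊥. -/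
theorem stmt_16 {X : Type*} [NormedAddCommGroup X] [NormedSpace ℂ X] [CompleteSpace X]
    (T : X →L[ℂ] X) (hT : T ≠ 0) (x : X) (hx : ‖x‖ = 1) (hxM : ‖T x‖ = ‖T‖)
    (α : ℂ) (hα : ‖α‖ = 1) (y : X)
    (hplus : ∀ t : ℝ, 0 ≤ t → ‖x + ((t : ℂ) * α) • y‖ ≥ ‖x‖)
    (hnotperp : ∃ t₀ : ℝ, t₀ < 0 ∧ ‖x + ((t₀ : ℂ) * α) • y‖ < ‖x‖) :
    (∀ t : ℝ, 0 ≤ t → ‖T x + ((t : ℂ) * α) • T y‖ ≥ ‖T x‖) ∧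
      (∃ t₁ : ℝ, ‖T x + ((t₁ : ℂ) * α) • T y‖ < ‖T x‖) := by
  obtain ⟨t₀, ht₀neg, ht₀⟩ := hnotperp
  have hTpos : (0 : ℝ) < ‖T‖ := norm_pos_iff.mpr hT
  have key : ∀ s : ℝ, T x + ((s : ℂ) * α) • T y = T (x + ((s : ℂ) * α) • y) := by
    intro s; simp [map_add, map_smul]
  have h₀ : ‖T x + ((t₀ : ℂ) * α) • T y‖ < ‖T x‖ := by
    rw [key]
    calc ‖T (x + ((t₀ : ℂ) * α) • y)‖ ≤ ‖T‖ * ‖x + ((t₀ : ℂ) * α) • y‖ := T.le_opNorm _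
      _ < ‖T‖ * 1 := by
          apply mul_lt_mul_of_pos_left _ hTpos
          rw [← hx]; exact ht₀
      _ = ‖T x‖ := by rw [mul_one, hxM]
  refine ⟨?_, ⟨t₀, h₀⟩⟩
  intro t ht
  by_contra hcon
  push_neg at hcon
  rcases eq_or_lt_of_le ht with rfl | htpos
  · simp at hcon
  · set u := T x + ((t₀ : ℂ) * α) • T y with hu
    set v := T x + ((t : ℂ) * α) • T y with hv
    have hden : (0 : ℝ) < t - t₀ := by linarith
    set a : ℝ := t / (t - t₀) with ha
    set b : ℝ := -t₀ / (t - t₀) with hb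
    have hapos : 0 < a := div_pos htpos hden
    have hbpos : 0 < b := div_pos (by linarith) hden
    have hne : t - t₀ ≠ 0 := hden.ne'
    have hnec : (t : ℂ) - (t₀ : ℂ) ≠ 0 := by
      rw [← Complex.ofReal_sub]
      exact_mod_cast hne
    have hab : a + b = 1 := by rw [ha, hb]; field_simp [hne]; ring
    have hcomb : T x = (a : ℂ) • u + (b : ℂ) • v := by
      rw [hu, hv]
      match_scalars <;> push_cast [ha, hb] <;> field_simp [hnec] <;> ring
    have : ‖T x‖ < ‖T x‖ := by
      calc ‖T x‖ = ‖(a : ℂ) • u + (b : ℂ) • v‖ := by rw [hcomb]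
        _ ≤ ‖(a : ℂ) • u‖ + ‖(b : ℂ) • v‖ := norm_add_le _ _
        _ = a * ‖u‖ + b * ‖v‖ := by
            rw [norm_smul, norm_smul, Complex.norm_real, Complex.norm_real,
              Real.norm_of_nonneg hapos.le, Real.norm_of_nonneg hbpos.le]
        _ < a * ‖T x‖ + b * ‖T x‖ :=
            add_lt_add (mul_lt_mul_of_pos_left h₀ hapos) (mul_lt_mul_of_pos_left hcon hbpos)
        _ = ‖T x‖ := by rw [← add_mul, hab, one_mul]
    exact lt_irrefl _ this
end

section
/- Let X = ℓ_p²(ℂ) with 1 < p < ∞, i.e., ℂ² with the norm ‖(z₁, z₂)‖ = (|z₁|^p + |z₂|^p)^{1/p}. If (z₁, z₂) is a unit vector with z₂ ≠ 0, then (z₁, z₂) ⊥_B (1, −(|z₁|^{p−2} z̄₁)/(|z₂|^{p−2} z̄₂)), where ⊥_B is Birkhoff-James orthogonality: ‖u + λv‖ ≥ ‖u‖ for all λ ∈ ℂ. -/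
noncomputable def lpNorm (p : ℝ) (z : ℂ × ℂ) : ℝ :=
  (‖z.1‖ ^ p + ‖z.2‖ ^ p) ^ (1 / p)

/-!
With `aᵢ = |zᵢ|^(p-2) z̄ᵢ`, the functional `φ(w) = a₁ w₁ + a₂ w₂` satisfies `φ(z) = ‖z‖ᵖ`, and,
since `|aᵢ|^q = |zᵢ|ᵖ` for the conjugate exponent `q`, Hölder's inequality gives
`|φ(w)| ≤ ‖z‖^(p-1) ‖w‖`. The direction `v = (1, -a₁ / a₂)` lies in the kernel of `φ`, so
`‖z‖ᵖ = |φ(z + λv)| ≤ ‖z‖^(p-1) ‖z + λv‖`.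
-/

noncomputable def dualCoeff (p : ℝ) (z : ℂ) : ℂ :=
  ((‖z‖ ^ (p - 2) : ℝ) : ℂ) * starRingEnd ℂ z

lemma dualCoeff_ne_zero (p : ℝ) {z : ℂ} (hz : z ≠ 0) : dualCoeff p z ≠ 0 :=
  mul_ne_zero (Complex.ofReal_ne_zero.mpr (Real.rpow_pos_of_pos (norm_pos_iff.mpr hz) _).ne')
    ((map_ne_zero _).mpr hz)

lemma dualCoeff_mul_self {p : ℝ} (hp : p ≠ 0) (z : ℂ) :
    dualCoeff p z * z = ((‖z‖ ^ p : ℝ) : ℂ) := by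
  rcases eq_or_ne z 0 with rfl | hz
  · simp [dualCoeff, Real.zero_rpow hp]
  · rw [dualCoeff, mul_assoc, mul_comm (starRingEnd ℂ z), Complex.mul_conj,
      Complex.normSq_eq_norm_sq, ← Complex.ofReal_mul, ← Real.rpow_two,
      ← Real.rpow_add (norm_pos_iff.mpr hz), sub_add_cancel]

lemma norm_dualCoeff {p : ℝ} (hp : p ≠ 1) (z : ℂ) : ‖dualCoeff p z‖ = ‖z‖ ^ (p - 1) := by
  rcases eq_or_ne z 0 with rfl | hz
  · simp [dualCoeff, Real.zero_rpow (sub_ne_zero.mpr hp)]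
  · rw [dualCoeff, norm_mul, Complex.norm_real, Complex.norm_conj,
      Real.norm_of_nonneg (by positivity), ← Real.rpow_add_one (norm_ne_zero_iff.mpr hz)]
    ring_nf

lemma lpNorm_nonneg (p : ℝ) (z : ℂ × ℂ) : 0 ≤ lpNorm p z := by
  unfold lpNorm; positivity

lemma lpNorm_rpow {p : ℝ} (hp : p ≠ 0) (z : ℂ × ℂ) :
    lpNorm p z ^ p = ‖z.1‖ ^ p + ‖z.2‖ ^ p := by
  rw [lpNorm, ← Real.rpow_mul (by positivity), one_div_mul_cancel hp, Real.rpow_one]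

noncomputable def dualPairing (p : ℝ) (z : ℂ × ℂ) : ℂ × ℂ →ₗ[ℂ] ℂ :=
  dualCoeff p z.1 • LinearMap.fst ℂ ℂ ℂ + dualCoeff p z.2 • LinearMap.snd ℂ ℂ ℂ

lemma dualPairing_apply (p : ℝ) (z w : ℂ × ℂ) :
    dualPairing p z w = dualCoeff p z.1 * w.1 + dualCoeff p z.2 * w.2 := rfl

lemma dualPairing_self {p : ℝ} (hp : p ≠ 0) (z : ℂ × ℂ) :
    dualPairing p z z = ((lpNorm p z ^ p : ℝ) : ℂ) := by
  rw [dualPairing_apply, dualCoeff_mul_self hp, dualCoeff_mul_self hp, lpNorm_rpow hp,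
    Complex.ofReal_add]

lemma norm_dualPairing_le {p : ℝ} (hp : 1 < p) (z w : ℂ × ℂ) :
    ‖dualPairing p z w‖ ≤ lpNorm p z ^ (p - 1) * lpNorm p w := by
  have hpq : p.HolderConjugate p.conjExponent := .conjExponent hp
  have hcoeff (x : ℂ) : ‖dualCoeff p x‖ ^ p.conjExponent = ‖x‖ ^ p := by
    rw [norm_dualCoeff hp.ne', ← Real.rpow_mul (norm_nonneg x), hpq.sub_one_mul_conj]
  have hexp : 1 / p.conjExponent = 1 / p * (p - 1) := by
    rw [Real.conjExponent]; field_simp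
  have holder := Real.inner_le_Lp_mul_Lq_of_nonneg Finset.univ hpq.symm
    (f := ![‖dualCoeff p z.1‖, ‖dualCoeff p z.2‖]) (g := ![‖w.1‖, ‖w.2‖])
    (by intro i _; fin_cases i <;> simp) (by intro i _; fin_cases i <;> simp)
  simp only [Fin.sum_univ_two, Matrix.cons_val_zero, Matrix.cons_val_one, hcoeff] at holder
  calc ‖dualPairing p z w‖
      ≤ ‖dualCoeff p z.1‖ * ‖w.1‖ + ‖dualCoeff p z.2‖ * ‖w.2‖ := by
        rw [dualPairing_apply, ← norm_mul, ← norm_mul]; exact norm_add_le _ _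
    _ ≤ (‖z.1‖ ^ p + ‖z.2‖ ^ p) ^ (1 / p.conjExponent) * lpNorm p w := holder
    _ = lpNorm p z ^ (p - 1) * lpNorm p w := by
        rw [hexp, Real.rpow_mul (by positivity)]
        rfl

lemma lpNorm_le_of_dualPairing_eq {p : ℝ} (hp : 1 < p) {z w : ℂ × ℂ}
    (h : dualPairing p z w = dualPairing p z z) : lpNorm p z ≤ lpNorm p w := by
  rcases (lpNorm_nonneg p z).eq_or_lt with hz | hz
  · rw [← hz]; exact lpNorm_nonneg p w
  have hbound := norm_dualPairing_le hp z w
  have hsplit : lpNorm p z ^ p = lpNorm p z ^ (p - 1) * lpNorm p z := by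
    rw [← Real.rpow_add_one hz.ne', sub_add_cancel]
  rw [h, dualPairing_self (by linarith), Complex.norm_real, Real.norm_of_nonneg (by positivity),
    hsplit] at hbound
  exact le_of_mul_le_mul_left hbound (by positivity)

theorem stmt_18_general (p : ℝ) (hp : 1 < p) (z₁ z₂ : ℂ)
    (hz₂ : z₂ ≠ 0) :
    ∀ lam : ℂ,
      lpNorm p ((z₁, z₂) + lam • ((1 : ℂ),
          -(((‖z₁‖ ^ (p - 2) : ℝ) : ℂ) * (starRingEnd ℂ) z₁) /
            (((‖z₂‖ ^ (p - 2) : ℝ) : ℂ) * (starRingEnd ℂ) z₂))) ≥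
        lpNorm p (z₁, z₂) := by
  intro lam
  change lpNorm p (z₁, z₂) ≤
    lpNorm p ((z₁, z₂) + lam • ((1 : ℂ), -dualCoeff p z₁ / dualCoeff p z₂))
  have hkernel : dualPairing p (z₁, z₂) ((1 : ℂ), -dualCoeff p z₁ / dualCoeff p z₂) = 0 := by
    rw [dualPairing_apply, mul_div_cancel₀ _ (dualCoeff_ne_zero p hz₂)]
    ring
  apply lpNorm_le_of_dualPairing_eq hp
  rw [map_add, map_smul, hkernel, smul_zero, add_zero]

theorem stmt_18 (p : ℝ) (hp : 1 < p) (z₁ z₂ : ℂ)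
    (hunit : lpNorm p (z₁, z₂) = 1) (hz₂ : z₂ ≠ 0) :
    ∀ lam : ℂ,
      lpNorm p ((z₁, z₂) + lam • ((1 : ℂ),
          -(((‖z₁‖ ^ (p - 2) : ℝ) : ℂ) * (starRingEnd ℂ) z₁) /
            (((‖z₂‖ ^ (p - 2) : ℝ) : ℂ) * (starRingEnd ℂ) z₂))) ≥
        lpNorm p (z₁, z₂) :=
  stmt_18_general p hp z₁ z₂ hz₂
end
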